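/- Let A be an n×n real symmetric matrix, σ* ∈ {±1}ⁿ, and Y* = σ*(σ*)ᵀ. Suppose there exists a diagonal matrix D* such that S* := D* - A satisfies: S* is positive semidefinite, the second smallest eigenvalue of S* is strictly positive, and S*σ* = 0. Then Y* is the unique maximizer of ⟨A,Y⟩ over all symmetric positive semidefinite matrices Y with Yᵢᵢ = 1 for all i ∈ [n]. -/

import Mathlib

open Matrix

/-- Trace inner product `⟨A,Y⟩ = ∑ᵢⱼ Aᵢⱼ Yᵢⱼ`. -/
def traceInner {n : ℕ} (A Y : Matrix (Fin n) (Fin n) ℝ) : ℝ :=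
  ∑ i, ∑ j, A i j * Y i j

/-!
On the feasible set, `⟨A, Y⟩ = ∑ᵢ dᵢ - ⟨S, Y⟩` because `A = diagonal d - S` and `Y` has unit
diagonal. Writing a positive semidefinite `Y` as `∑ₖ vₖ vₖᵀ` gives `⟨S, Y⟩ = ∑ₖ vₖᵀ S vₖ ≥ 0`,
while `⟨S, Y*⟩ = σᵀ S σ = 0`; hence `Y*` is optimal. At equality every `vₖ` lies in
`ker S = span σ`, so `Y` is a multiple of `Y* = σ σᵀ`, and the unit diagonal forces the
multiple to be `1`.
-/

section TraceInner

variable {n : ℕ}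

theorem traceInner_sub_left (A B Y : Matrix (Fin n) (Fin n) ℝ) :
    traceInner (A - B) Y = traceInner A Y - traceInner B Y := by
  simp only [traceInner, Matrix.sub_apply, sub_mul, Finset.sum_sub_distrib]

theorem traceInner_sum_right {ι : Type*} (s : Finset ι) (S : Matrix (Fin n) (Fin n) ℝ)
    (Y : ι → Matrix (Fin n) (Fin n) ℝ) :
    traceInner S (∑ k ∈ s, Y k) = ∑ k ∈ s, traceInner S (Y k) := by
  simp only [traceInner, Matrix.sum_apply, Finset.mul_sum]
  rw [Finset.sum_comm_cycle]

theorem traceInner_vecMulVec_self (S : Matrix (Fin n) (Fin n) ℝ) (x : Fin n → ℝ) :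
    traceInner S (vecMulVec x x) = x ⬝ᵥ S *ᵥ x := by
  simp only [traceInner, vecMulVec_apply, dotProduct, mulVec, Finset.mul_sum]
  exact Finset.sum_congr rfl fun _ _ => Finset.sum_congr rfl fun _ _ => by ring

theorem traceInner_diagonal_of_diag_eq_one (d : Fin n → ℝ) {Y : Matrix (Fin n) (Fin n) ℝ}
    (hY : ∀ i, Y i i = 1) : traceInner (diagonal d) Y = ∑ i, d i := by
  refine Finset.sum_congr rfl fun i _ => ?_
  rw [Finset.sum_eq_single i (fun j _ hj => by simp [diagonal_apply_ne' d hj]) (by simp)]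
  simp [hY i]

end TraceInner

theorem Matrix.PosSemidef.exists_eq_sum_vecMulVec_self {ι : Type*} [Finite ι]
    {Y : Matrix ι ι ℝ} (hY : Y.PosSemidef) :
    ∃ (m : ℕ) (v : Fin m → ι → ℝ), Y = ∑ k, vecMulVec (v k) (v k) := by
  simpa only [star_trivial] using posSemidef_iff_eq_sum_vecMulVec.mp hY

section PosSemidef

variable {n : ℕ} {S Y : Matrix (Fin n) (Fin n) ℝ}

theorem traceInner_nonneg_of_posSemidef (hS : S.PosSemidef) (hY : Y.PosSemidef) :
    0 ≤ traceInner S Y := by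
  obtain ⟨m, v, rfl⟩ := hY.exists_eq_sum_vecMulVec_self
  rw [traceInner_sum_right]
  exact Finset.sum_nonneg fun k _ => by
    simpa [traceInner_vecMulVec_self] using hS.dotProduct_mulVec_nonneg (v k)

theorem exists_eq_smul_vecMulVec_of_traceInner_eq_zero (hS : S.PosSemidef) {σ : Fin n → ℝ}
    (hker : ∀ x : Fin n → ℝ, S *ᵥ x = 0 → ∃ c : ℝ, x = c • σ) (hY : Y.PosSemidef)
    (h : traceInner S Y = 0) :
    ∃ c : ℝ, Y = c • vecMulVec σ σ := by
  obtain ⟨m, v, rfl⟩ := hY.exists_eq_sum_vecMulVec_self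
  have hquad : ∀ k, 0 ≤ v k ⬝ᵥ S *ᵥ v k := fun k => by
    simpa using hS.dotProduct_mulVec_nonneg (v k)
  simp only [traceInner_sum_right, traceInner_vecMulVec_self] at h
  have hzero : ∀ k, v k ⬝ᵥ S *ᵥ v k = 0 := fun k =>
    (Finset.sum_eq_zero_iff_of_nonneg fun k _ => hquad k).mp h k (Finset.mem_univ k)
  have hmem : ∀ k, ∃ c : ℝ, v k = c • σ := fun k =>
    hker _ <| (hS.dotProduct_mulVec_zero_iff (v k)).mp <| by simpa using hzero k
  choose c hc using hmem
  refine ⟨∑ k, c k * c k, ?_⟩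
  simp only [hc, smul_vecMulVec, vecMulVec_smul, smul_smul, Finset.sum_smul]

end PosSemidef

theorem sdp_dual_certificate_censored_general {n : ℕ}
    (A : Matrix (Fin n) (Fin n) ℝ)
    (σ : Fin n → ℝ) (hσ : ∀ i, σ i = 1 ∨ σ i = -1)
    (d : Fin n → ℝ)
    (Ystar : Matrix (Fin n) (Fin n) ℝ) (hYstar : Ystar = Matrix.of fun i j => σ i * σ j)
    (S : Matrix (Fin n) (Fin n) ℝ)
    (hS : S = Matrix.diagonal d - A)
    (hpsd : S.PosSemidef)
    (hker : ∀ x : Fin n → ℝ, S.mulVec x = 0 → ∃ c : ℝ, x = c • σ)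
    (hSσ : S.mulVec σ = 0) :
    ∀ Y : Matrix (Fin n) (Fin n) ℝ,
      Y.PosSemidef → (∀ i, Y i i = 1) →
        traceInner A Y ≤ traceInner A Ystar ∧
        (traceInner A Y = traceInner A Ystar → Y = Ystar) := by
  intro Y hY hYdiag
  obtain rfl : Ystar = vecMulVec σ σ := hYstar
  have hσσ : ∀ i, σ i * σ i = 1 := fun i => by rcases hσ i with h | h <;> simp [h]
  have hobjective : ∀ Z : Matrix (Fin n) (Fin n) ℝ, (∀ i, Z i i = 1) →
      traceInner A Z = ∑ i, d i - traceInner S Z := fun Z hZ => by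
    rw [show A = diagonal d - S by rw [hS, sub_sub_cancel], traceInner_sub_left,
      traceInner_diagonal_of_diag_eq_one d hZ]
  have hSYstar : traceInner S (vecMulVec σ σ) = 0 := by
    rw [traceInner_vecMulVec_self, hSσ, dotProduct_zero]
  rw [hobjective Y hYdiag, hobjective _ hσσ, hSYstar]
  refine ⟨by linarith [traceInner_nonneg_of_posSemidef hpsd hY], fun heq => ?_⟩
  obtain ⟨c, rfl⟩ := exists_eq_smul_vecMulVec_of_traceInner_eq_zero hpsd hker hY (by linarith)
  ext i j
  have hc : c = 1 := by simpa [vecMulVec_apply, hσσ] using hYdiag i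
  simp [hc]

/-- Dual certificate lemma for the SDP relaxation in the binary censored block model.
If `S* = D* - A` is PSD, has `σ*` in its kernel, and its second smallest eigenvalue is
positive (equivalently, given PSD and `S*σ* = 0`, its kernel is exactly the span of `σ*`),
then `Y* = σ*(σ*)ᵀ` is the unique maximizer of `⟨A,Y⟩` over PSD matrices with unit
diagonal. -/
theorem sdp_dual_certificate_censored {n : ℕ}
    (A : Matrix (Fin n) (Fin n) ℝ) (hA : A.IsSymm)
    (σ : Fin n → ℝ) (hσ : ∀ i, σ i = 1 ∨ σ i = -1)
    (d : Fin n → ℝ)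
    (Ystar : Matrix (Fin n) (Fin n) ℝ) (hYstar : Ystar = Matrix.of fun i j => σ i * σ j)
    (S : Matrix (Fin n) (Fin n) ℝ)
    (hS : S = Matrix.diagonal d - A)
    (hpsd : S.PosSemidef)
    (hker : ∀ x : Fin n → ℝ, S.mulVec x = 0 → ∃ c : ℝ, x = c • σ)
    (hSσ : S.mulVec σ = 0) :
    ∀ Y : Matrix (Fin n) (Fin n) ℝ,
      Y.PosSemidef → (∀ i, Y i i = 1) →
        traceInner A Y ≤ traceInner A Ystar ∧
        (traceInner A Y = traceInner A Ystar → Y = Ystar) :=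
  sdp_dual_certificate_censored_general A σ hσ d Ystar hYstar S hS hpsd hker hSσ
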